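/- arXiv:2006.13591 — 3 statements merged into one kernel-verified Lean document; each statement's English description precedes it below -/
import Mathlib

section
/- Let $H \in \mathbb{R}^{n\times n}$ be a symmetric positive definite matrix and let $\mathcal{P} = \{\mathcal{P}_1,\dots,\mathcal{P}_K\}$ be a partition of $\{1,\dots,n\}$ into $K$ disjoint nonempty sets. Define the block-diagonal matrix $H_\mathcal{P} := \sum_{k=1}^K H_{[\mathcal{P}_k,\mathcal{P}_k]}$, where $H_{[\mathcal{P}_k,\mathcal{P}_k]}$ is the matrix equal to $H$ on entries $(i,j)$ with $i,j \in \mathcal{P}_k$ and zero elsewhere. Then for every $x \in \mathbb{R}^n$ it holds that $x^\top H x \leq K\, x^\top H_\mathcal{P} x$. -/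
/-!
Write `x = ∑ₖ vₖ` with `vₖ` the restriction of `x` to the `k`-th block. The quadratic form of the
masked matrix is `∑ₖ vₖᵀ H vₖ`, while `xᵀ H x = ∑ₖ ∑ₗ vₖᵀ H vₗ`; each of these `K²` cross terms is
at most `(vₖᵀ H vₖ + vₗᵀ H vₗ) / 2` because `(vₖ - vₗ)ᵀ H (vₖ - vₗ) ≥ 0`.
-/

open Matrix

/-- Block-diagonal restriction of a matrix induced by a block assignment `π`. -/
def maskMat {n K : ℕ} (M : Matrix (Fin n) (Fin n) ℝ) (π : Fin n → Fin K) :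
    Matrix (Fin n) (Fin n) ℝ :=
  Matrix.of fun i j => if π i = π j then M i j else 0

open Finset

namespace Matrix

variable {n : Type*} [Fintype n] {H : Matrix n n ℝ}

lemma PosSemidef.two_mul_dotProduct_mulVec_le (hH : H.PosSemidef) (a b : n → ℝ) :
    2 * (a ⬝ᵥ H *ᵥ b) ≤ a ⬝ᵥ H *ᵥ a + b ⬝ᵥ H *ᵥ b := by
  have hsymm : b ⬝ᵥ H *ᵥ a = a ⬝ᵥ H *ᵥ b := by
    rw [dotProduct_mulVec, ← mulVec_transpose, ← conjTranspose_eq_transpose_of_trivial,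
      hH.isHermitian.eq, dotProduct_comm]
  have hnonneg := hH.dotProduct_mulVec_nonneg (a - b)
  simp only [star_trivial, mulVec_sub, dotProduct_sub, sub_dotProduct] at hnonneg
  linarith

lemma PosSemidef.dotProduct_mulVec_sum_le {ι : Type*} (hH : H.PosSemidef) (s : Finset ι)
    (v : ι → n → ℝ) :
    (∑ k ∈ s, v k) ⬝ᵥ H *ᵥ (∑ k ∈ s, v k) ≤ #s * ∑ k ∈ s, v k ⬝ᵥ H *ᵥ v k := by
  calc (∑ k ∈ s, v k) ⬝ᵥ H *ᵥ (∑ k ∈ s, v k) = ∑ k ∈ s, ∑ l ∈ s, v k ⬝ᵥ H *ᵥ v l := by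
        rw [mulVec_sum, sum_dotProduct]
        simp only [dotProduct_sum]
    _ ≤ ∑ k ∈ s, ∑ l ∈ s, (v k ⬝ᵥ H *ᵥ v k + v l ⬝ᵥ H *ᵥ v l) / 2 := by
        gcongr with k _ l _
        linarith [hH.two_mul_dotProduct_mulVec_le (v k) (v l)]
    _ = #s * ∑ k ∈ s, v k ⬝ᵥ H *ᵥ v k := by
        simp only [add_div, sum_add_distrib, sum_const, nsmul_eq_mul, ← sum_div, ← mul_sum]
        ring

end Matrix

lemma sum_indicator_preimage_singleton {ι κ M : Type*} [Fintype κ] [AddCommMonoid M]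
    (π : ι → κ) (x : ι → M) : ∑ k, (π ⁻¹' {k}).indicator x = x := by
  classical
  funext i
  simp [Finset.sum_apply, Set.indicator_apply]

section maskMat

variable {n K : ℕ} (M : Matrix (Fin n) (Fin n) ℝ) (π : Fin n → Fin K) (x : Fin n → ℝ)

lemma maskMat_mulVec_apply (i : Fin n) :
    (maskMat M π *ᵥ x) i = (M *ᵥ (π ⁻¹' {π i}).indicator x) i := by
  classical
  simp only [maskMat, mulVec, dotProduct, of_apply, Set.indicator_apply, Set.mem_preimage,
    Set.mem_singleton_iff, ite_mul, zero_mul, mul_ite, mul_zero, eq_comm]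

lemma dotProduct_maskMat_mulVec :
    x ⬝ᵥ maskMat M π *ᵥ x =
      ∑ k, (π ⁻¹' {k}).indicator x ⬝ᵥ M *ᵥ (π ⁻¹' {k}).indicator x := by
  calc x ⬝ᵥ maskMat M π *ᵥ x
      = ∑ k, ∑ i with π i = k, x i * (M *ᵥ (π ⁻¹' {k}).indicator x) i := by
        rw [dotProduct, ← sum_fiberwise univ π]
        refine sum_congr rfl fun k _ => sum_congr rfl fun i hi => ?_
        rw [maskMat_mulVec_apply, (mem_filter.1 hi).2]
    _ = _ := by
        classical
        simp only [dotProduct, Set.indicator_apply, Set.mem_preimage, Set.mem_singleton_iff,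
          ite_mul, zero_mul, sum_ite, sum_const_zero, add_zero]

end maskMat

theorem stmt0_general {n K : ℕ} (H : Matrix (Fin n) (Fin n) ℝ) (hH : H.PosDef)
    (π : Fin n → Fin K) (x : Fin n → ℝ) :
    x ⬝ᵥ (H *ᵥ x) ≤ (K : ℝ) * (x ⬝ᵥ (maskMat H π *ᵥ x)) := by
  set v : Fin K → Fin n → ℝ := fun k => (π ⁻¹' {k}).indicator x
  calc x ⬝ᵥ H *ᵥ x = (∑ k, v k) ⬝ᵥ H *ᵥ (∑ k, v k) := by
        rw [sum_indicator_preimage_singleton]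
    _ ≤ #(univ : Finset (Fin K)) * ∑ k, v k ⬝ᵥ H *ᵥ v k :=
        hH.posSemidef.dotProduct_mulVec_sum_le _ _
    _ = K * (x ⬝ᵥ maskMat H π *ᵥ x) := by
        rw [dotProduct_maskMat_mulVec, card_univ, Fintype.card_fin]

theorem stmt0 {n K : ℕ} (H : Matrix (Fin n) (Fin n) ℝ) (hH : H.PosDef)
    (π : Fin n → Fin K) (hπ : Function.Surjective π) (x : Fin n → ℝ) :
    x ⬝ᵥ (H *ᵥ x) ≤ (K : ℝ) * (x ⬝ᵥ (maskMat H π *ᵥ x)) :=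
  stmt0_general H hH π x
end

section
/- Let $\ell : \mathbb{R}^m \to \mathbb{R}$ be differentiable and $\gamma$-smooth (i.e. $\ell(v+w) \le \ell(v) + \nabla\ell(v)^\top w + \tfrac{\gamma}{2}\|w\|^2$ for all $v,w$), let $A \in \mathbb{R}^{m\times n}$, $f(x) = \ell(Ax)$, and $M := A^\top A$. Let $\mathcal{P}$ be a partition of $[n]$ into $K$ blocks such that $M_\mathcal{P}$ (the block-diagonal restriction of $M$) is invertible. Then one step $x_+ = x - \tfrac{1}{K\gamma} M_\mathcal{P}^{-1}\nabla f(x)$ satisfies $f(x) - f(x_+) \geq \tfrac{1}{2K\gamma}\, \nabla\ell(Ax)^\top A M_\mathcal{P}^{-1} A^\top \nabla\ell(Ax)$. -/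
open Matrix

def blockRestrict {ι κ R : Type*} [DecidableEq κ] [Zero R] (π : ι → κ) (Δ : ι → R) (k : κ) :
    ι → R :=
  fun i => if π i = k then Δ i else 0

theorem sum_blockRestrict {ι κ R : Type*} [Fintype κ] [DecidableEq κ] [AddCommMonoid R]
    (π : ι → κ) (Δ : ι → R) : ∑ k, blockRestrict π Δ k = Δ := by
  ext i
  simp [blockRestrict]

theorem dotProduct_maskMat_mulVec_s4 {n K : ℕ} (M : Matrix (Fin n) (Fin n) ℝ) (π : Fin n → Fin K)
    (Δ : Fin n → ℝ) :
    Δ ⬝ᵥ (maskMat M π *ᵥ Δ) = ∑ k, blockRestrict π Δ k ⬝ᵥ (M *ᵥ blockRestrict π Δ k) := by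
  simp only [dotProduct, mulVec, maskMat, blockRestrict, of_apply, Finset.mul_sum]
  rw [eq_comm, Finset.sum_comm]
  refine Finset.sum_congr rfl fun i _ => ?_
  rw [Finset.sum_comm]
  refine Finset.sum_congr rfl fun j _ => ?_
  split_ifs with h <;> simp [h, ite_mul, mul_ite]

theorem dotProduct_transpose_mul_self_mulVec {ι n R : Type*} [Fintype ι] [Fintype n]
    [CommSemiring R] (A : Matrix ι n R) (v : n → R) :
    v ⬝ᵥ ((Aᵀ * A) *ᵥ v) = (A *ᵥ v) ⬝ᵥ (A *ᵥ v) := by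
  rw [← mulVec_mulVec, dotProduct_mulVec, vecMul_transpose]

theorem dotProduct_self_sum_le_card_mul {ι κ : Type*} [Fintype ι] [Fintype κ]
    (v : κ → ι → ℝ) :
    (∑ k, v k) ⬝ᵥ (∑ k, v k) ≤ Fintype.card κ * ∑ k, v k ⬝ᵥ v k := by
  simp only [dotProduct, Finset.sum_apply, ← sq]
  rw [Finset.sum_comm, Finset.mul_sum]
  exact Finset.sum_le_sum fun i _ => sq_sum_le_card_mul_sum_sq

theorem dotProduct_gram_mulVec_le {ι : Type*} [Fintype ι] {n K : ℕ} (A : Matrix ι (Fin n) ℝ)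
    (π : Fin n → Fin K) (Δ : Fin n → ℝ) :
    Δ ⬝ᵥ ((Aᵀ * A) *ᵥ Δ) ≤ K * (Δ ⬝ᵥ (maskMat (Aᵀ * A) π *ᵥ Δ)) := by
  have hsplit : A *ᵥ Δ = ∑ k, A *ᵥ blockRestrict π Δ k := by
    rw [← mulVec_sum, sum_blockRestrict]
  simp only [dotProduct_maskMat_mulVec_s4, dotProduct_transpose_mul_self_mulVec, hsplit]
  simpa using dotProduct_self_sum_le_card_mul fun k => A *ᵥ blockRestrict π Δ k

theorem le_of_smooth_comp_mulVec {ι n : Type*} [Fintype ι] [Fintype n] {γ : ℝ}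
    {ℓ : (ι → ℝ) → ℝ} {g : (ι → ℝ) → (ι → ℝ)}
    (hsmooth : ∀ v u, ℓ (v + u) ≤ ℓ v + g v ⬝ᵥ u + γ / 2 * (u ⬝ᵥ u))
    (A : Matrix ι n ℝ) (x Δ : n → ℝ) :
    ℓ (A *ᵥ (x + Δ)) ≤
      ℓ (A *ᵥ x) + (Aᵀ *ᵥ g (A *ᵥ x)) ⬝ᵥ Δ + γ / 2 * (Δ ⬝ᵥ ((Aᵀ * A) *ᵥ Δ)) := by
  rw [mulVec_add, dotProduct_transpose_mul_self_mulVec, mulVec_transpose, ← dotProduct_mulVec]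
  exact hsmooth _ _

theorem dotProduct_mulVec_neg_smul_inv_mulVec {n : Type*} [Fintype n] [DecidableEq n]
    {P : Matrix n n ℝ} (hP : IsUnit P.det) (c : ℝ) (w : n → ℝ) :
    -(c • (P⁻¹ *ᵥ w)) ⬝ᵥ (P *ᵥ -(c • (P⁻¹ *ᵥ w))) = c ^ 2 * (w ⬝ᵥ (P⁻¹ *ᵥ w)) := by
  rw [mulVec_neg, mulVec_smul, mulVec_mulVec, mul_nonsing_inv _ hP, one_mulVec,
    dotProduct_comm]
  simp only [dotProduct_neg, neg_dotProduct, smul_dotProduct, dotProduct_smul, smul_eq_mul]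
  ring

theorem stmt4_general {m n K : ℕ} (γ : ℝ) (hγ : 0 < γ)
    (ℓ : (Fin m → ℝ) → ℝ) (g : (Fin m → ℝ) → (Fin m → ℝ))
    (hsmooth : ∀ v u, ℓ (v + u) ≤ ℓ v + g v ⬝ᵥ u + γ / 2 * (u ⬝ᵥ u))
    (A : Matrix (Fin m) (Fin n) ℝ)
    (M : Matrix (Fin n) (Fin n) ℝ) (hM : M = Aᵀ * A)
    (π : Fin n → Fin K) (hMinv : IsUnit (maskMat M π).det)
    (f : (Fin n → ℝ) → ℝ) (hf : ∀ x, f x = ℓ (A *ᵥ x))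
    (x xplus : Fin n → ℝ)
    (hxplus : xplus = x - (1 / ((K : ℝ) * γ)) • ((maskMat M π)⁻¹ *ᵥ (Aᵀ *ᵥ g (A *ᵥ x)))) :
    f x - f xplus ≥
      1 / (2 * (K : ℝ) * γ) *
        (g (A *ᵥ x) ⬝ᵥ ((A * (maskMat M π)⁻¹ * Aᵀ) *ᵥ g (A *ᵥ x))) := by
  subst hM
  set N := (maskMat (Aᵀ * A) π)⁻¹
  set w := Aᵀ *ᵥ g (A *ᵥ x)
  set c := 1 / ((K : ℝ) * γ)
  set Δ := -(c • (N *ᵥ w))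
  have hx : xplus = x + Δ := by rw [hxplus, sub_eq_add_neg]
  have hdescent := le_of_smooth_comp_mulVec hsmooth A x Δ
  have hblock :=
    mul_le_mul_of_nonneg_left (dotProduct_gram_mulVec_le A π Δ) (by positivity : 0 ≤ γ / 2)
  have hlin : w ⬝ᵥ Δ = -(c * (w ⬝ᵥ (N *ᵥ w))) := by simp [Δ]
  have hquad : Δ ⬝ᵥ (maskMat (Aᵀ * A) π *ᵥ Δ) = c ^ 2 * (w ⬝ᵥ (N *ᵥ w)) :=
    dotProduct_mulVec_neg_smul_inv_mulVec hMinv c w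
  have hrhs : g (A *ᵥ x) ⬝ᵥ ((A * N * Aᵀ) *ᵥ g (A *ᵥ x)) = w ⬝ᵥ (N *ᵥ w) := by
    rw [← mulVec_mulVec, ← mulVec_mulVec, dotProduct_mulVec, ← mulVec_transpose]
  have hcoeff : c - γ / 2 * (K * c ^ 2) = 1 / (2 * K * γ) := by
    by_cases ht : (K : ℝ) * γ = 0
    · simp [c, ht, mul_assoc]
    · simp only [c]
      field_simp
      ring
  rw [hlin] at hdescent
  rw [hquad] at hblock
  rw [hf, hf, hx, hrhs, ← hcoeff]
  linarith

theorem stmt4 {m n K : ℕ} (hK : 1 ≤ K) (γ : ℝ) (hγ : 0 < γ)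
    (ℓ : (Fin m → ℝ) → ℝ) (g : (Fin m → ℝ) → (Fin m → ℝ))
    (hdiff : Differentiable ℝ ℓ)
    (hgrad : ∀ v u, fderiv ℝ ℓ v u = g v ⬝ᵥ u)
    (hsmooth : ∀ v u, ℓ (v + u) ≤ ℓ v + g v ⬝ᵥ u + γ / 2 * (u ⬝ᵥ u))
    (A : Matrix (Fin m) (Fin n) ℝ)
    (M : Matrix (Fin n) (Fin n) ℝ) (hM : M = Aᵀ * A)
    (π : Fin n → Fin K) (hMinv : IsUnit (maskMat M π).det)
    (f : (Fin n → ℝ) → ℝ) (hf : ∀ x, f x = ℓ (A *ᵥ x))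
    (x xplus : Fin n → ℝ)
    (hxplus : xplus = x - (1 / ((K : ℝ) * γ)) • ((maskMat M π)⁻¹ *ᵥ (Aᵀ *ᵥ g (A *ᵥ x)))) :
    f x - f xplus ≥
      1 / (2 * (K : ℝ) * γ) *
        (g (A *ᵥ x) ⬝ᵥ ((A * (maskMat M π)⁻¹ * Aᵀ) *ᵥ g (A *ᵥ x))) :=
  stmt4_general γ hγ ℓ g hsmooth A M hM π hMinv f hf x xplus hxplus
end

section
/- Let $\ell : \mathbb{R}^m \to \mathbb{R}$ be $\gamma$-smooth, satisfy the Polyak–Łojasiewicz condition $\tfrac12\|\nabla\ell(v)\|^2 \ge \mu(\ell(v) - \ell^\star)$ with $\ell^\star = \min_v \ell(v)$ and $\mu > 0$. Let $A \in \mathbb{R}^{m\times n}$, $f(x) = \ell(Ax)$, $M = A^\top A$, and suppose $\min_x f(x) = \ell^\star$ is attained. For random partitions $\mathcal{P}^t$ of $[n]$ into $K$ blocks (with $M_{\mathcal{P}^t}$ invertible a.s.) and updates $x_{t+1} = x_t - \tfrac{1}{K\gamma} M_{\mathcal{P}^t}^{-1}\nabla f(x_t)$, define $\rho := \tfrac{\mu}{K\gamma}\lambda_{\min}\big(A\,\mathbb{E}[M_{\mathcal{P}^t}^{-1}]\,A^\top\big)$.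 Then $\mathbb{E}[f(x_t)] - f^\star \le (1-\rho)^t (f(x_0) - f^\star)$. -/
/-!
Each step lowers `ℓ ∘ A` in expectation by `(1/(2Kγ)) ⟨∇ℓ, A 𝔼[M_π⁻¹] Aᵀ ∇ℓ⟩`: γ-smoothness bounds
the step along `d = M_π⁻¹ Aᵀ ∇ℓ` by the quadratic form `|A d|²`, and splitting `A d` over the `K`
blocks of `π` and applying Cauchy–Schwarz gives `|A d|² ≤ K ⟨d, M_π d⟩`. The quadratic form is
at least `λ_min |∇ℓ|²`, and the PL inequality turns this into a contraction by `1 - ρ` of the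
optimality gap, which iterates along the random path of partitions.
-/

open Matrix

/-- The smallest (real) eigenvalue of a matrix. -/
noncomputable def lambdaMin {n : ℕ} (M : Matrix (Fin n) (Fin n) ℝ) : ℝ :=
  sInf {μ : ℝ | Module.End.HasEigenvalue (Matrix.toLin' M) μ}

namespace Matrix

section Eigenvalues
variable {m : ℕ} {B : Matrix (Fin m) (Fin m) ℝ}

lemma IsHermitian.setOf_hasEigenvalue_toLin'_eq_range (hB : B.IsHermitian) :
    {μ : ℝ | Module.End.HasEigenvalue (toLin' B) μ} = Set.range hB.eigenvalues := by
  ext μ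
  rw [Set.mem_ofPred_eq, Module.End.hasEigenvalue_iff_mem_spectrum,
    ← hB.spectrum_real_eq_range_eigenvalues]
  exact Eq.to_iff (congrArg (μ ∈ ·) (AlgEquiv.spectrum_eq toLinAlgEquiv' B))

lemma IsHermitian.lambdaMin_le_eigenvalues (hB : B.IsHermitian) (i : Fin m) :
    lambdaMin B ≤ hB.eigenvalues i := by
  rw [lambdaMin, hB.setOf_hasEigenvalue_toLin'_eq_range]
  exact csInf_le (Set.finite_range _).bddBelow ⟨i, rfl⟩

lemma PosSemidef.lambdaMin_nonneg (hB : B.PosSemidef) : 0 ≤ lambdaMin B := by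
  rw [lambdaMin, hB.isHermitian.setOf_hasEigenvalue_toLin'_eq_range]
  exact Real.sInf_nonneg (by rintro _ ⟨i, rfl⟩; exact hB.eigenvalues_nonneg i)

lemma IsHermitian.posSemidef_sub_lambdaMin_smul_one (hB : B.IsHermitian) :
    (B - lambdaMin B • 1).PosSemidef := by
  rw [posSemidef_iff_isHermitian_and_spectrum_nonneg]
  refine ⟨hB.sub (isHermitian_one.smul (IsSelfAdjoint.all _)), ?_⟩
  rw [← Algebra.algebraMap_eq_smul_one, ← spectrum.sub_singleton_eq,
    hB.spectrum_real_eq_range_eigenvalues]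
  rintro _ ⟨_, ⟨i, rfl⟩, _, rfl, rfl⟩
  exact sub_nonneg.mpr (hB.lambdaMin_le_eigenvalues i)

lemma IsHermitian.lambdaMin_mul_dotProduct_self_le (hB : B.IsHermitian) (v : Fin m → ℝ) :
    lambdaMin B * (v ⬝ᵥ v) ≤ v ⬝ᵥ (B *ᵥ v) := by
  have := hB.posSemidef_sub_lambdaMin_smul_one.dotProduct_mulVec_nonneg v
  simpa [sub_mulVec, dotProduct_sub, smul_mulVec, dotProduct_smul] using this

end Eigenvalues

variable {m n K : ℕ}

def blockProj (π : Fin n → Fin K) (k : Fin K) : Matrix (Fin n) (Fin n) ℝ :=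
  diagonal fun i => if π i = k then 1 else 0

lemma blockProj_transpose (π : Fin n → Fin K) (k : Fin K) :
    (blockProj π k)ᵀ = blockProj π k :=
  diagonal_transpose _

lemma sum_blockProj (π : Fin n → Fin K) : ∑ k, blockProj π k = 1 := by
  ext i j
  by_cases h : i = j <;> simp [blockProj, Matrix.sum_apply, h, one_apply]

lemma maskMat_eq_sum_blockProj (M : Matrix (Fin n) (Fin n) ℝ) (π : Fin n → Fin K) :
    maskMat M π = ∑ k, blockProj π k * M * blockProj π k := by
  ext i j
  by_cases h : π i = π j <;> simp [maskMat, blockProj, Matrix.sum_apply, h, eq_comm]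

lemma posSemidef_maskMat_gram (A : Matrix (Fin m) (Fin n) ℝ) (π : Fin n → Fin K) :
    (maskMat (Aᵀ * A) π).PosSemidef := by
  rw [maskMat_eq_sum_blockProj]
  refine posSemidef_sum _ fun k _ => ?_
  simpa [conjTranspose_eq_transpose_of_trivial, blockProj_transpose, Matrix.mul_assoc]
    using posSemidef_conjTranspose_mul_self (A * blockProj π k)

lemma sum_dotProduct_sum_le_card_mul {ι : Type*} [Fintype ι] (v : ι → Fin m → ℝ) :
    (∑ k, v k) ⬝ᵥ (∑ k, v k) ≤ Fintype.card ι * ∑ k, v k ⬝ᵥ v k := by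
  simp only [dotProduct, Finset.sum_apply, ← sq]
  rw [Finset.sum_comm, Finset.mul_sum]
  exact Finset.sum_le_sum fun j _ => sq_sum_le_card_mul_sum_sq

lemma dotProduct_self_le_mul_maskMat_gram (A : Matrix (Fin m) (Fin n) ℝ) (π : Fin n → Fin K)
    (x : Fin n → ℝ) :
    (A *ᵥ x) ⬝ᵥ (A *ᵥ x) ≤ K * (x ⬝ᵥ (maskMat (Aᵀ * A) π *ᵥ x)) := by
  have hx : A *ᵥ x = ∑ k, A *ᵥ (blockProj π k *ᵥ x) := by
    rw [← mulVec_sum, ← sum_mulVec, sum_blockProj, one_mulVec]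
  have hquad : x ⬝ᵥ (maskMat (Aᵀ * A) π *ᵥ x)
      = ∑ k, (A *ᵥ (blockProj π k *ᵥ x)) ⬝ᵥ (A *ᵥ (blockProj π k *ᵥ x)) := by
    simp only [maskMat_eq_sum_blockProj, sum_mulVec, dotProduct_sum, ← mulVec_mulVec]
    refine Finset.sum_congr rfl fun k _ => ?_
    rw [dotProduct_mulVec, ← mulVec_transpose, blockProj_transpose, dotProduct_mulVec,
      vecMul_transpose]
  rw [hquad, hx]
  simpa using sum_dotProduct_sum_le_card_mul fun k => A *ᵥ (blockProj π k *ᵥ x)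

end Matrix

section PathExpectation
variable {α ι : Type*} [Fintype ι] (w : ι → ℝ) (step : α → ι → α) (F : α → ℝ)

/-- `𝔼[F xₜ]` for `x₀ = x` and `xₛ₊₁ = step xₛ aₛ`, with `a₀, a₁, …` i.i.d. of law `w`. -/
noncomputable def pathExpect (t : ℕ) (x : α) : ℝ :=
  ∑ p : Fin t → ι, (∏ i, w (p i)) * F ((List.ofFn p).foldl step x)

@[simp]
lemma pathExpect_zero (x : α) : pathExpect w step F 0 x = F x := by
  simp [pathExpect]

lemma pathExpect_succ (t : ℕ) (x : α) :
    pathExpect w step F (t + 1) x = ∑ a, w a * pathExpect w step F t (step x a) := by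
  rw [pathExpect, ← (Fin.consEquiv fun _ => ι).sum_comp, Fintype.sum_prod_type]
  refine Finset.sum_congr rfl fun a _ => ?_
  simp [pathExpect, Finset.mul_sum, Fin.prod_univ_succ, List.ofFn_succ, mul_assoc]

variable {w step F} {l σ : ℝ}

lemma pathExpect_sub_le_pow_mul_of_nonneg (hw : ∀ a, 0 ≤ w a) (hwsum : ∑ a, w a = 1)
    (hσ : 0 ≤ σ) (hcontr : ∀ x, ∑ a, w a * F (step x a) - l ≤ σ * (F x - l)) (t : ℕ) (x : α) :
    pathExpect w step F t x - l ≤ σ ^ t * (F x - l) := by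
  induction t generalizing x with
  | zero => simp
  | succ t ih =>
    have hcenter : ∀ G : ι → ℝ, ∑ a, w a * G a - l = ∑ a, w a * (G a - l) := fun G => by
      simp [mul_sub, ← Finset.sum_mul, hwsum]
    calc pathExpect w step F (t + 1) x - l
        = ∑ a, w a * (pathExpect w step F t (step x a) - l) := by
          rw [pathExpect_succ, hcenter]
      _ ≤ ∑ a, w a * (σ ^ t * (F (step x a) - l)) :=
          Finset.sum_le_sum fun a _ => mul_le_mul_of_nonneg_left (ih _) (hw a)
      _ = σ ^ t * (∑ a, w a * F (step x a) - l) := by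
          rw [hcenter, Finset.mul_sum]
          exact Finset.sum_congr rfl fun a _ => by ring
      _ ≤ σ ^ (t + 1) * (F x - l) := by
          rw [pow_succ, mul_assoc]
          exact mul_le_mul_of_nonneg_left (hcontr x) (pow_nonneg hσ t)

theorem pathExpect_sub_le_pow_mul (hw : ∀ a, 0 ≤ w a) (hwsum : ∑ a, w a = 1)
    (hF : ∀ x, l ≤ F x) (hcontr : ∀ x, ∑ a, w a * F (step x a) - l ≤ σ * (F x - l))
    (t : ℕ) (x : α) :
    pathExpect w step F t x - l ≤ σ ^ t * (F x - l) := by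
  rcases le_or_gt 0 σ with hσ | hσ
  · exact pathExpect_sub_le_pow_mul_of_nonneg hw hwsum hσ hcontr t x
  -- A negative contraction factor forces `F` to be constant, and then `σ = 0` works as well.
  have hconst : ∀ y, F y = l := fun y => by
    have hmean : l ≤ ∑ a, w a * F (step y a) := by
      calc l = ∑ a, w a * l := by rw [← Finset.sum_mul, hwsum, one_mul]
        _ ≤ _ := Finset.sum_le_sum fun a _ => mul_le_mul_of_nonneg_left (hF _) (hw a)
    nlinarith [hcontr y, hF y]
  have hzero : ∀ y, ∑ a, w a * F (step y a) - l ≤ 0 * (F y - l) := fun y => by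
    simp [hconst, ← Finset.sum_mul, hwsum]
  simpa [hconst] using pathExpect_sub_le_pow_mul_of_nonneg hw hwsum le_rfl hzero t x

end PathExpectation

section Descent
variable {m n K : ℕ} {ℓ : (Fin m → ℝ) → ℝ} {g : (Fin m → ℝ) → (Fin m → ℝ)} {γ κ : ℝ}

lemma descent_of_smooth_of_gram_le
    (hsmooth : ∀ v u, ℓ (v + u) ≤ ℓ v + g v ⬝ᵥ u + γ / 2 * (u ⬝ᵥ u)) (hγ : 0 < γ) (hκ : 0 < κ)
    (A : Matrix (Fin m) (Fin n) ℝ) {P : Matrix (Fin n) (Fin n) ℝ} (hP : IsUnit P.det)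
    (hgram : ∀ z, (A *ᵥ z) ⬝ᵥ (A *ᵥ z) ≤ κ * (z ⬝ᵥ (P *ᵥ z))) (x : Fin n → ℝ) :
    ℓ (A *ᵥ (x - (1 / (κ * γ)) • (P⁻¹ *ᵥ (Aᵀ *ᵥ g (A *ᵥ x)))))
      ≤ ℓ (A *ᵥ x) - 1 / (κ * γ) / 2 * ((Aᵀ *ᵥ g (A *ᵥ x)) ⬝ᵥ (P⁻¹ *ᵥ (Aᵀ *ᵥ g (A *ᵥ x)))) := by
  set c := 1 / (κ * γ) with hc
  set b := Aᵀ *ᵥ g (A *ᵥ x)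
  set z := P⁻¹ *ᵥ b
  have hAz : (A *ᵥ z) ⬝ᵥ (A *ᵥ z) ≤ κ * (b ⬝ᵥ z) := by
    have hPz : P *ᵥ z = b := by rw [mulVec_mulVec, mul_nonsing_inv _ hP, one_mulVec]
    simpa [hPz, dotProduct_comm] using hgram z
  have hlin : g (A *ᵥ x) ⬝ᵥ (A *ᵥ z) = b ⬝ᵥ z := by
    rw [dotProduct_mulVec, ← mulVec_transpose]
  calc ℓ (A *ᵥ (x - c • z)) = ℓ (A *ᵥ x + -(c • A *ᵥ z)) := by
        rw [mulVec_sub, mulVec_smul, sub_eq_add_neg]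
    _ ≤ ℓ (A *ᵥ x) + g (A *ᵥ x) ⬝ᵥ -(c • A *ᵥ z)
          + γ / 2 * ((-(c • A *ᵥ z)) ⬝ᵥ -(c • A *ᵥ z)) := hsmooth _ _
    _ = ℓ (A *ᵥ x) - c * (b ⬝ᵥ z) + γ / 2 * c ^ 2 * ((A *ᵥ z) ⬝ᵥ (A *ᵥ z)) := by
        simp only [dotProduct_neg, neg_dotProduct, dotProduct_smul, smul_dotProduct, hlin,
          smul_eq_mul]
        ring
    _ ≤ ℓ (A *ᵥ x) - c * (b ⬝ᵥ z) + γ / 2 * c ^ 2 * (κ * (b ⬝ᵥ z)) := by gcongr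
    -- the step size `1/(κγ)` makes the curvature term exactly half the linear one
    _ = ℓ (A *ᵥ x) - c / 2 * (b ⬝ᵥ z) := by
        rw [hc]
        field_simp
        ring

lemma dotProduct_mul_sum_smul_mul_transpose_mulVec {ι : Type*} [Fintype ι]
    (A : Matrix (Fin m) (Fin n) ℝ) (w : ι → ℝ) (N : ι → Matrix (Fin n) (Fin n) ℝ)
    (v : Fin m → ℝ) :
    v ⬝ᵥ ((A * (∑ i, w i • N i) * Aᵀ) *ᵥ v) = ∑ i, w i * ((Aᵀ *ᵥ v) ⬝ᵥ (N i *ᵥ (Aᵀ *ᵥ v))) := by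
  rw [← mulVec_mulVec, ← mulVec_mulVec, dotProduct_mulVec, ← mulVec_transpose, sum_mulVec,
    dotProduct_sum]
  simp only [smul_mulVec, dotProduct_smul, smul_eq_mul]

lemma posSemidef_mul_sum_smul_inv_maskMat_mul_transpose (A : Matrix (Fin m) (Fin n) ℝ)
    {w : (Fin n → Fin K) → ℝ} (hw : ∀ π, 0 ≤ w π) :
    (A * (∑ π, w π • (maskMat (Aᵀ * A) π)⁻¹) * Aᵀ).PosSemidef := by
  simpa [conjTranspose_eq_transpose_of_trivial] using
    (posSemidef_sum _ fun π _ => ((posSemidef_maskMat_gram A π).inv).smul (hw π))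
      |>.mul_mul_conjTranspose_same A

lemma expected_descent_of_smooth
    (hsmooth : ∀ v u, ℓ (v + u) ≤ ℓ v + g v ⬝ᵥ u + γ / 2 * (u ⬝ᵥ u)) (hγ : 0 < γ) (hK : 0 < K)
    (A : Matrix (Fin m) (Fin n) ℝ) {w : (Fin n → Fin K) → ℝ} (hw : ∀ π, 0 ≤ w π)
    (hwsum : ∑ π, w π = 1) (hinv : ∀ π, 0 < w π → IsUnit (maskMat (Aᵀ * A) π).det)
    (x : Fin n → ℝ) :
    ∑ π, w π * ℓ (A *ᵥ (x - (1 / ((K : ℝ) * γ)) •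
        ((maskMat (Aᵀ * A) π)⁻¹ *ᵥ (Aᵀ *ᵥ g (A *ᵥ x)))))
      ≤ ℓ (A *ᵥ x) - 1 / ((K : ℝ) * γ) / 2 *
        (g (A *ᵥ x) ⬝ᵥ ((A * (∑ π, w π • (maskMat (Aᵀ * A) π)⁻¹) * Aᵀ) *ᵥ g (A *ᵥ x))) := by
  set b := Aᵀ *ᵥ g (A *ᵥ x)
  have hK' : (0 : ℝ) < K := by exact_mod_cast hK
  calc ∑ π, w π * ℓ (A *ᵥ (x - (1 / ((K : ℝ) * γ)) • ((maskMat (Aᵀ * A) π)⁻¹ *ᵥ b)))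
      ≤ ∑ π, w π * (ℓ (A *ᵥ x) - 1 / ((K : ℝ) * γ) / 2 * (b ⬝ᵥ ((maskMat (Aᵀ * A) π)⁻¹ *ᵥ b))) := by
        refine Finset.sum_le_sum fun π _ => ?_
        rcases (hw π).eq_or_lt with h0 | hpos
        · simp [← h0]
        · exact mul_le_mul_of_nonneg_left (descent_of_smooth_of_gram_le hsmooth hγ hK' A
            (hinv π hpos) (dotProduct_self_le_mul_maskMat_gram A π) x) (hw π)
    _ = _ := by
        rw [dotProduct_mul_sum_smul_mul_transpose_mulVec, Finset.mul_sum]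
        simp only [mul_sub, Finset.sum_sub_distrib, ← Finset.sum_mul, hwsum, one_mul]
        exact congrArg _ (Finset.sum_congr rfl fun π _ => by ring)

end Descent

theorem stmt5_general {m n K : ℕ} (hK : 1 ≤ K) (γ μ : ℝ) (hγ : 0 < γ)
    (ℓ : (Fin m → ℝ) → ℝ) (g : (Fin m → ℝ) → (Fin m → ℝ))
    (hsmooth : ∀ v u, ℓ (v + u) ≤ ℓ v + g v ⬝ᵥ u + γ / 2 * (u ⬝ᵥ u))
    (lstar : ℝ) (hlb : ∀ v, lstar ≤ ℓ v)
    -- Polyak–Łojasiewicz condition with constant μ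
    (hPL : ∀ v, 1 / 2 * (g v ⬝ᵥ g v) ≥ μ * (ℓ v - lstar))
    (A : Matrix (Fin m) (Fin n) ℝ)
    (M : Matrix (Fin n) (Fin n) ℝ) (hM : M = Aᵀ * A)
    (f : (Fin n → ℝ) → ℝ) (hf : ∀ x, f x = ℓ (A *ᵥ x))
    -- the distribution of the random partition, as a weight function
    (w : (Fin n → Fin K) → ℝ) (hw : ∀ π, 0 ≤ w π) (hwsum : ∑ π, w π = 1)
    (hinv : ∀ π, 0 < w π → IsUnit (maskMat M π).det)
    (ρ : ℝ)
    (hρ : ρ = μ / ((K : ℝ) * γ) *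
        lambdaMin (A * (∑ π, w π • (maskMat M π)⁻¹) * Aᵀ)) :
    ∀ (t : ℕ) (x0 : Fin n → ℝ),
      (∑ p : Fin t → (Fin n → Fin K),
          (∏ i, w (p i)) *
            f ((List.ofFn p).foldl
                (fun x π =>
                  x - (1 / ((K : ℝ) * γ)) • ((maskMat M π)⁻¹ *ᵥ (Aᵀ *ᵥ g (A *ᵥ x))))
                x0))
        - lstar ≤ (1 - ρ) ^ t * (f x0 - lstar) := by
  intro t x0
  subst hM hρ
  obtain rfl : f = fun x => ℓ (A *ᵥ x) := funext hf
  have hB := posSemidef_mul_sum_smul_inv_maskMat_mul_transpose A hw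
  have hc : 0 ≤ 1 / ((K : ℝ) * γ) := by positivity
  refine pathExpect_sub_le_pow_mul hw hwsum (fun x => hlb _) (fun x => ?_) t x0
  have hPLx := mul_le_mul_of_nonneg_left (hPL (A *ᵥ x)) (mul_nonneg hc hB.lambdaMin_nonneg)
  calc _ ≤ ℓ (A *ᵥ x) - lstar - 1 / ((K : ℝ) * γ) / 2 *
          (g (A *ᵥ x) ⬝ᵥ ((A * (∑ π, w π • (maskMat (Aᵀ * A) π)⁻¹) * Aᵀ) *ᵥ g (A *ᵥ x))) := by
        linarith [expected_descent_of_smooth hsmooth hγ hK A hw hwsum hinv x]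
    _ ≤ ℓ (A *ᵥ x) - lstar - 1 / ((K : ℝ) * γ) / 2 *
          (lambdaMin (A * (∑ π, w π • (maskMat (Aᵀ * A) π)⁻¹) * Aᵀ) *
            (g (A *ᵥ x) ⬝ᵥ g (A *ᵥ x))) := by
        gcongr
        exact hB.isHermitian.lambdaMin_mul_dotProduct_self_le _
    _ ≤ _ := by linear_combination hPLx

theorem stmt5 {m n K : ℕ} (hK : 1 ≤ K) (γ μ : ℝ) (hγ : 0 < γ) (hμ : 0 < μ)
    (ℓ : (Fin m → ℝ) → ℝ) (g : (Fin m → ℝ) → (Fin m → ℝ))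
    (hdiff : Differentiable ℝ ℓ)
    (hgrad : ∀ v u, fderiv ℝ ℓ v u = g v ⬝ᵥ u)
    (hsmooth : ∀ v u, ℓ (v + u) ≤ ℓ v + g v ⬝ᵥ u + γ / 2 * (u ⬝ᵥ u))
    (lstar : ℝ) (hlb : ∀ v, lstar ≤ ℓ v)
    -- Polyak–Łojasiewicz condition with constant μ
    (hPL : ∀ v, 1 / 2 * (g v ⬝ᵥ g v) ≥ μ * (ℓ v - lstar))
    (A : Matrix (Fin m) (Fin n) ℝ)
    (M : Matrix (Fin n) (Fin n) ℝ) (hM : M = Aᵀ * A)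
    (f : (Fin n → ℝ) → ℝ) (hf : ∀ x, f x = ℓ (A *ᵥ x))
    -- the minimum of f is attained and equals ℓ⋆
    (hattained : ∃ xs, f xs = lstar)
    -- the distribution of the random partition, as a weight function
    (w : (Fin n → Fin K) → ℝ) (hw : ∀ π, 0 ≤ w π) (hwsum : ∑ π, w π = 1)
    (hinv : ∀ π, 0 < w π → IsUnit (maskMat M π).det)
    (ρ : ℝ)
    (hρ : ρ = μ / ((K : ℝ) * γ) *
        lambdaMin (A * (∑ π, w π • (maskMat M π)⁻¹) * Aᵀ)) :
    ∀ (t : ℕ) (x0 : Fin n → ℝ),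
      (∑ p : Fin t → (Fin n → Fin K),
          (∏ i, w (p i)) *
            f ((List.ofFn p).foldl
                (fun x π =>
                  x - (1 / ((K : ℝ) * γ)) • ((maskMat M π)⁻¹ *ᵥ (Aᵀ *ᵥ g (A *ᵥ x))))
                x0))
        - lstar ≤ (1 - ρ) ^ t * (f x0 - lstar) :=
  stmt5_general hK γ μ hγ ℓ g hsmooth lstar hlb hPL A M hM f hf w hw hwsum hinv ρ hρ
end
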